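/- Let B₁, B₂ ⊆ B_{ℂ²}(0,1) be balls of radius 0.01 whose centers are at distance 1.2 from each other. Let p⃗₁ = (x₁,y₁) ∈ B₁, p⃗₃ = (x₃,y₃) ∈ B₂, p⃗₂ = (x₂,y₂) ∈ B₂, p⃗₄ = (x₄,y₄) ∈ B₁, and suppose |Δ(p⃗₁, p⃗₂) − Δ(p⃗₃, p⃗₄)| < δ. Define v := ((y₁−y₃)/2, −(x₁−x₃)/2, 1), w := ((y₂−y₄)/2, −(x₂−x₄)/2, 1) ∈ ℂ³, and A(s,t) := ((p⃗₁+p⃗₃)/2 − (p⃗₂+p⃗₄)/2, 0) + s·v − t·w ∈ ℂ³ for s, t ∈ ℂ. Then there exist s, t ∈ ℂ with |s| = |t| ≤ 1/2 and ‖A(s,t)‖ < δ. In particular, the distance between the line segments {((p⃗₁+p⃗₃)/2, 0) + s·v : |s| ≤ 1/2} and {((p⃗₂+p⃗₄)/2, 0) + t·w : |t| ≤ 1/2} is less than δ. -/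

import Mathlib

/-!
Put `d = (p₁ + p₃)/2 - (p₂ + p₄)/2` and `f = ((p₁ - p₃) - (p₂ - p₄))/2` in `ℂ²`. Then
`A(s, s) = (d + s f^⊥, 0)` with `f^⊥ = (f₂, -f₁)`, and `Δ(p₁, p₂) - Δ(p₃, p₄) = 4 d ⬝ᵥ f` for
the bilinear dot product. The vectors `f^⊥` and `f̄` are orthogonal of the same length `‖f‖`, so
removing from `d` its component along `f^⊥` leaves a vector of length
`|d ⬝ᵥ f| / ‖f‖ < δ / (4‖f‖)`, and the coefficient `s` used has `|s| ≤ ‖d‖ / ‖f‖`. The ball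
hypotheses give `‖d‖ ≤ 0.02` and `‖f‖ ≥ 1.2 - 0.02`, whence `|s| ≤ 1/2` and `‖A(s, s)‖ < δ`.
-/

open Metric
open scoped Classical

noncomputable section

/-- `ℂⁿ` with its Euclidean (Hermitian) metric. -/
abbrev Cspace (n : ℕ) := EuclideanSpace ℂ (Fin n)

/-- The point of `ℂ³` with coordinates `(a, b, c)`. -/
def pt3 (a b c : ℂ) : Cspace 3 :=
  WithLp.toLp 2 (fun i : Fin 3 => if i = 0 then a else if i = 1 then b else c)

/-- The auxiliary complex line `l_{p₁,p₂} ⊆ ℂ³` associated to `p₁, p₂ ∈ ℂ²`. -/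
def auxLine (p₁ p₂ : Cspace 2) : Set (Cspace 3) :=
  {w | ∃ z : ℂ, w = pt3 ((p₁ 0 + p₂ 0) / 2 + z * (p₁ 1 - p₂ 1) / 2)
      ((p₁ 1 + p₂ 1) / 2 - z * (p₁ 0 - p₂ 0) / 2) z}

/-- The tube `T_{q₁,q₂} ⊆ ℂ³` associated to the `δ`-balls `q₁, q₂ ⊆ ℂ²` with centres
`c₁, c₂`: the union of the auxiliary lines over pairs of points of the balls, intersected
with `B_{ℂ³}(0,1)`. -/
def TT (δ : ℝ) (c₁ c₂ : Cspace 2) : Set (Cspace 3) :=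
  (⋃ p₁ ∈ closedBall c₁ δ, ⋃ p₂ ∈ closedBall c₂ δ, auxLine p₁ p₂) ∩
    closedBall (0 : Cspace 3) 1

/-- The open line segment `{z • u + t : z ∈ ℂ, |z| < l/2}` in `ℂ³`. -/
def segC3 (u t : Cspace 3) (l : ℝ) : Set (Cspace 3) :=
  {x | ∃ z : ℂ, ‖z‖ < l / 2 ∧ x = z • u + t}

/-- The complex tube of length `l` and radius `r` in `ℂ³`: the closed `r`-neighbourhood of
the segment `{z • u + t : |z| < l/2}` in the Euclidean metric of `ℂ³ ≅ ℝ⁶`. -/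
def tubeC3 (u t : Cspace 3) (l r : ℝ) : Set (Cspace 3) :=
  cthickening r (segC3 u t l)

/-- The complex "distance" `Δ(p₁, p₂) = (x₁ - x₂)² + (y₁ - y₂)²` of two points of `ℂ²`. -/
def cDelta (p₁ p₂ : Cspace 2) : ℂ := (p₁ 0 - p₂ 0) ^ 2 + (p₁ 1 - p₂ 1) ^ 2

/-- The direction vector `((y₁ - y₂)/2, -(x₁ - x₂)/2, 1) ∈ ℂ³` of the auxiliary line
`l_{p₁,p₂}`. -/
def auxDir (p₁ p₂ : Cspace 2) : Cspace 3 :=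
  pt3 ((p₁ 1 - p₂ 1) / 2) (-(p₁ 0 - p₂ 0) / 2) 1

/-- The point `(u⃗, 0) ∈ ℂ³` for `u⃗ ∈ ℂ²`. -/
def liftPt (u : Cspace 2) : Cspace 3 := pt3 (u 0) (u 1) 0

open Matrix

def perp (u : Cspace 2) : Cspace 2 := WithLp.toLp 2 ![u 1, -u 0]

lemma norm_perp (u : Cspace 2) : ‖perp u‖ = ‖u‖ := by
  simp [EuclideanSpace.norm_eq, perp, Fin.sum_univ_two, add_comm]

lemma perp_dotProduct_self (u : Cspace 2) : (perp u).ofLp ⬝ᵥ u.ofLp = 0 := by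
  simp only [dotProduct, perp, Fin.sum_univ_two, cons_val_zero, cons_val_one, cons_val_fin_one,
    neg_mul]
  ring

-- Lagrange's identity for the orthogonal basis `perp f`, `f̄` of `ℂ²`.
lemma norm_sq_mul_norm_sq_eq_norm_inner_perp_sq_add (x f : Cspace 2) :
    ‖x‖ ^ 2 * ‖f‖ ^ 2 = ‖inner ℂ (perp f) x‖ ^ 2 + ‖x.ofLp ⬝ᵥ f.ofLp‖ ^ 2 := by
  simp only [EuclideanSpace.norm_sq_eq, EuclideanSpace.inner_eq_star_dotProduct, perp,
    dotProduct, Fin.sum_univ_two, Complex.sq_norm]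
  simp only [Complex.normSq_apply, Pi.star_apply, cons_val_zero, RCLike.star_def, cons_val_one,
    cons_val_fin_one, star_neg, mul_neg, Complex.add_re, Complex.mul_re, Complex.conj_re,
    Complex.conj_im, sub_neg_eq_add, Complex.neg_re, neg_add_rev, Complex.add_im, Complex.mul_im,
    Complex.neg_im, neg_neg]
  ring

lemma exists_norm_smul_le_and_norm_add_smul_perp_eq (d f : Cspace 2) (hf : f ≠ 0) :
    ∃ s : ℂ, ‖s‖ * ‖f‖ ≤ ‖d‖ ∧ ‖d + s • perp f‖ * ‖f‖ = ‖d.ofLp ⬝ᵥ f.ofLp‖ := by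
  have hf_pos : 0 < ‖f‖ := norm_pos_iff.mpr hf
  set s : ℂ := -inner ℂ (perp f) d / (‖f‖ ^ 2 : ℝ)
  have horth : inner ℂ (perp f) (d + s • perp f) = 0 := by
    rw [inner_add_right, inner_smul_right, inner_self_eq_norm_sq_to_K, norm_perp]
    change inner ℂ (perp f) d + s * (‖f‖ : ℂ) ^ 2 = 0
    have : (‖f‖ : ℂ) ≠ 0 := by exact_mod_cast hf_pos.ne'
    simp only [s]
    push_cast
    field_simp
    ring
  have hdot : (d + s • perp f).ofLp ⬝ᵥ f.ofLp = d.ofLp ⬝ᵥ f.ofLp := by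
    rw [WithLp.ofLp_add, WithLp.ofLp_smul, add_dotProduct, smul_dotProduct, perp_dotProduct_self,
      smul_zero, add_zero]
  refine ⟨s, ?_, ?_⟩
  · calc ‖s‖ * ‖f‖ = ‖inner ℂ (perp f) d‖ / ‖f‖ := by
          simp only [s, norm_div, norm_neg, Complex.norm_real, norm_pow, norm_norm]
          field_simp
      _ ≤ ‖perp f‖ * ‖d‖ / ‖f‖ := by gcongr; exact norm_inner_le_norm _ _
      _ = ‖d‖ := by rw [norm_perp]; field_simp
  · have := norm_sq_mul_norm_sq_eq_norm_inner_perp_sq_add (d + s • perp f) f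
    rw [horth, hdot, norm_zero, zero_pow two_ne_zero, zero_add, ← mul_pow] at this
    exact (pow_left_inj₀ (by positivity) (norm_nonneg _) two_ne_zero).mp this

lemma liftPt_add (x y : Cspace 2) : liftPt (x + y) = liftPt x + liftPt y := by
  ext i; fin_cases i <;> simp [liftPt, pt3]

lemma liftPt_sub (x y : Cspace 2) : liftPt (x - y) = liftPt x - liftPt y := by
  ext i; fin_cases i <;> simp [liftPt, pt3]

lemma liftPt_smul (c : ℂ) (x : Cspace 2) : liftPt (c • x) = c • liftPt x := by
  ext i; fin_cases i <;> simp [liftPt, pt3]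

lemma norm_liftPt (x : Cspace 2) : ‖liftPt x‖ = ‖x‖ := by
  simp [EuclideanSpace.norm_eq, liftPt, pt3, Fin.sum_univ_three, Fin.sum_univ_two]

lemma auxDir_sub_auxDir (p₁ p₂ q₁ q₂ : Cspace 2) :
    auxDir p₁ q₁ - auxDir p₂ q₂ = liftPt (perp ((1 / 2 : ℝ) • ((p₁ - q₁) - (p₂ - q₂)))) := by
  ext i; fin_cases i <;> simp [auxDir, liftPt, pt3, perp, Complex.real_smul] <;> ring

lemma cDelta_sub_cDelta (p₁ p₂ p₃ p₄ : Cspace 2) :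
    cDelta p₁ p₂ - cDelta p₃ p₄ = 4 * (((1 / 2 : ℝ) • (p₁ + p₃) - (1 / 2 : ℝ) • (p₂ + p₄)).ofLp ⬝ᵥ
      ((1 / 2 : ℝ) • ((p₁ - p₃) - (p₂ - p₄))).ofLp) := by
  simp only [cDelta, dotProduct, one_div, smul_add, PiLp.sub_apply, PiLp.add_apply, PiLp.smul_apply,
    Complex.real_smul, Complex.ofReal_inv, Complex.ofReal_ofNat, Fin.sum_univ_two]
  ring

section FourPoints

variable {E : Type*} [NormedAddCommGroup E] [NormedSpace ℝ E] {r : ℝ} {b₁ b₂ p₁ p₂ p₃ p₄ : E}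

lemma norm_half_smul_add_sub_sub_le (a b c e : E) :
    ‖(1 / 2 : ℝ) • (a + b - c - e)‖ ≤ (‖a‖ + ‖b‖ + ‖c‖ + ‖e‖) / 2 := by
  rw [norm_smul, Real.norm_of_nonneg (by norm_num)]
  have := norm_sub_le (a + b - c) e
  have := norm_sub_le (a + b) c
  have := norm_add_le a b
  linarith

lemma norm_midpoint_sub_midpoint_le (hp₁ : p₁ ∈ closedBall b₁ r) (hp₂ : p₂ ∈ closedBall b₂ r)
    (hp₃ : p₃ ∈ closedBall b₂ r) (hp₄ : p₄ ∈ closedBall b₁ r) :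
    ‖(1 / 2 : ℝ) • (p₁ + p₃) - (1 / 2 : ℝ) • (p₂ + p₄)‖ ≤ 2 * r := by
  rw [mem_closedBall_iff_norm] at *
  calc _ = ‖(1 / 2 : ℝ) • ((p₁ - b₁) + (p₃ - b₂) - (p₂ - b₂) - (p₄ - b₁))‖ := by congr 1; module
    _ ≤ 2 * r := (norm_half_smul_add_sub_sub_le _ _ _ _).trans (by linarith)

lemma norm_half_smul_sub_sub_sub_le (hp₁ : p₁ ∈ closedBall b₁ r) (hp₂ : p₂ ∈ closedBall b₂ r)
    (hp₃ : p₃ ∈ closedBall b₂ r) (hp₄ : p₄ ∈ closedBall b₁ r) :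
    ‖(1 / 2 : ℝ) • ((p₁ - p₃) - (p₂ - p₄)) - (b₁ - b₂)‖ ≤ 2 * r := by
  rw [mem_closedBall_iff_norm] at *
  calc _ = ‖(1 / 2 : ℝ) • ((p₁ - b₁) + (p₄ - b₁) - (p₃ - b₂) - (p₂ - b₂))‖ := by congr 1; module
    _ ≤ 2 * r := (norm_half_smul_add_sub_sub_le _ _ _ _).trans (by linarith)

end FourPoints

theorem statement14_general (δ : ℝ)
    (b₁ b₂ : Cspace 2)
    (hdist : dist b₁ b₂ = 1.2)
    (p₁ p₂ p₃ p₄ : Cspace 2)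
    (hp₁ : p₁ ∈ closedBall b₁ 0.01) (hp₃ : p₃ ∈ closedBall b₂ 0.01)
    (hp₂ : p₂ ∈ closedBall b₂ 0.01) (hp₄ : p₄ ∈ closedBall b₁ 0.01)
    (hΔ : ‖cDelta p₁ p₂ - cDelta p₃ p₄‖ < δ)
    (v w : Cspace 3) (hv : v = auxDir p₁ p₃) (hw : w = auxDir p₂ p₄)
    (A : ℂ → ℂ → Cspace 3)
    (hA : ∀ s t : ℂ,
      A s t = liftPt ((1 / 2 : ℝ) • (p₁ + p₃) - (1 / 2 : ℝ) • (p₂ + p₄)) + s • v - t • w) :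
    (∃ s t : ℂ, ‖s‖ = ‖t‖ ∧ ‖t‖ ≤ 1 / 2 ∧ ‖A s t‖ < δ) ∧
    -- in particular, the two line segments pass within distance `δ` of each other
    (∃ a ∈ {x : Cspace 3 | ∃ s : ℂ, ‖s‖ ≤ 1 / 2 ∧
        x = liftPt ((1 / 2 : ℝ) • (p₁ + p₃)) + s • v},
      ∃ b ∈ {x : Cspace 3 | ∃ t : ℂ, ‖t‖ ≤ 1 / 2 ∧
        x = liftPt ((1 / 2 : ℝ) • (p₂ + p₄)) + t • w},
      dist a b < δ) := by
  have hdist_eq (s : ℂ) : dist (liftPt ((1 / 2 : ℝ) • (p₁ + p₃)) + s • v)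
      (liftPt ((1 / 2 : ℝ) • (p₂ + p₄)) + s • w) = ‖A s s‖ := by
    rw [dist_eq_norm, hA, liftPt_sub, add_sub_add_comm, add_sub_assoc]
  set d := (1 / 2 : ℝ) • (p₁ + p₃) - (1 / 2 : ℝ) • (p₂ + p₄)
  set f := (1 / 2 : ℝ) • ((p₁ - p₃) - (p₂ - p₄))
  have hd : ‖d‖ ≤ 2 * 0.01 := norm_midpoint_sub_midpoint_le hp₁ hp₂ hp₃ hp₄
  have hf : 1.2 - 2 * 0.01 ≤ ‖f‖ := by
    have := norm_sub_norm_le (b₁ - b₂) f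
    rw [← dist_eq_norm, hdist, norm_sub_rev] at this
    linarith [norm_half_smul_sub_sub_sub_le hp₁ hp₂ hp₃ hp₄]
  have hdf : ‖d.ofLp ⬝ᵥ f.ofLp‖ < δ / 4 := by
    rw [cDelta_sub_cDelta, norm_mul, Complex.norm_ofNat] at hΔ
    linarith
  obtain ⟨s, hs, hAs⟩ := exists_norm_smul_le_and_norm_add_smul_perp_eq d f
    (norm_pos_iff.mp (by linarith))
  have hA' : A s s = liftPt (d + s • perp f) := by
    rw [hA, add_sub_assoc, ← smul_sub, hv, hw, auxDir_sub_auxDir, liftPt_add, liftPt_smul]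
  have hs' : ‖s‖ ≤ 1 / 2 := by nlinarith [norm_nonneg s]
  have hAδ : ‖A s s‖ < δ := by
    rw [hA', norm_liftPt]
    nlinarith [norm_nonneg (d + s • perp f)]
  refine ⟨⟨s, s, rfl, hs', hAδ⟩, _, ⟨s, hs', rfl⟩, _, ⟨s, hs', rfl⟩, ?_⟩
  rwa [hdist_eq]

/-- Claim in the proof of Proposition 5.4: the auxiliary lines pass
within distance `δ` of each other. -/
theorem statement14 (δ : ℝ) (hδ : 0 < δ)
    (b₁ b₂ : Cspace 2)
    (hb₁ : closedBall b₁ 0.01 ⊆ closedBall (0 : Cspace 2) 1)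
    (hb₂ : closedBall b₂ 0.01 ⊆ closedBall (0 : Cspace 2) 1)
    (hdist : dist b₁ b₂ = 1.2)
    (p₁ p₂ p₃ p₄ : Cspace 2)
    (hp₁ : p₁ ∈ closedBall b₁ 0.01) (hp₃ : p₃ ∈ closedBall b₂ 0.01)
    (hp₂ : p₂ ∈ closedBall b₂ 0.01) (hp₄ : p₄ ∈ closedBall b₁ 0.01)
    (hΔ : ‖cDelta p₁ p₂ - cDelta p₃ p₄‖ < δ)
    (v w : Cspace 3) (hv : v = auxDir p₁ p₃) (hw : w = auxDir p₂ p₄)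
    (A : ℂ → ℂ → Cspace 3)
    (hA : ∀ s t : ℂ,
      A s t = liftPt ((1 / 2 : ℝ) • (p₁ + p₃) - (1 / 2 : ℝ) • (p₂ + p₄)) + s • v - t • w) :
    (∃ s t : ℂ, ‖s‖ = ‖t‖ ∧ ‖t‖ ≤ 1 / 2 ∧ ‖A s t‖ < δ) ∧
    -- in particular, the two line segments pass within distance `δ` of each other
    (∃ a ∈ {x : Cspace 3 | ∃ s : ℂ, ‖s‖ ≤ 1 / 2 ∧
        x = liftPt ((1 / 2 : ℝ) • (p₁ + p₃)) + s • v},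
      ∃ b ∈ {x : Cspace 3 | ∃ t : ℂ, ‖t‖ ≤ 1 / 2 ∧
        x = liftPt ((1 / 2 : ℝ) • (p₂ + p₄)) + t • w},
      dist a b < δ) :=
  statement14_general δ b₁ b₂ hdist p₁ p₂ p₃ p₄ hp₁ hp₃ hp₂ hp₄ hΔ v w hv hw A hA
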